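/- Let X and Y be independent random variables on a probability space, each almost surely positive, with Lebesgue densities f_X and f_Y, and let Z = X/(X+Y) with density f_Z. Suppose there exist positive functions A, B on (0,∞) and constants λ > 0, θ > 0 such that f_Y(s*x) = A(s) * B(x) * exp(-λ*(s*x)^θ) for all s, x > 0. Then for almost every s > 0: (1/(A(s)*(s+1)^2)) * f_Z(1/(s+1)) = ∫_0^∞ x * B(x) * f_X(x) * exp(-λ * s^θ * x^θ) dx. -/

import Mathlib

open MeasureTheory ProbabilityTheory Real Set
open scoped ENNReal

lemma my_lintegral_cov {s : Set ℝ} {f f' : ℝ → ℝ}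
    (hs : MeasurableSet s) (hf' : ∀ x ∈ s, HasDerivWithinAt f (f' x) s x)
    (hf : Set.InjOn f s) (g : ℝ → ℝ≥0∞) :
    ∫⁻ x in f '' s, g x = ∫⁻ x in s, ENNReal.ofReal |f' x| * g (f x) := by
  simpa only [ContinuousLinearMap.det_toSpanSingleton] using
    lintegral_image_eq_lintegral_abs_det_fderiv_mul volume hs
      (fun x hx => (hf' x hx).hasFDerivWithinAt) hf g

lemma lemA (fZ : ℝ → ℝ) (μ : Measure ℝ)
    (hμ : μ.map (fun s => (s+1)⁻¹) = (volume.restrict (Ioo 0 1)).withDensity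
      (fun z => ENNReal.ofReal (fZ z)))
    {E : Set ℝ} (hE : MeasurableSet E) (hEsub : E ⊆ Ioi 0) :
    μ E = ∫⁻ s in E, ENNReal.ofReal (((s+1)^2)⁻¹) * ENNReal.ofReal (fZ ((s+1)⁻¹)) := by
  set ψ : ℝ → ℝ := fun s => (s+1)⁻¹ with hψdef
  have hψm : Measurable ψ := (measurable_id.add_const 1).inv
  have hψinj : Function.Injective ψ := fun a b h => by
    have := inv_injective h; linarith
  have him : ψ '' E = (fun z : ℝ => 1/z - 1) ⁻¹' E ∩ Ioo 0 1 := by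
    ext z
    constructor
    · rintro ⟨s, hsE, rfl⟩
      have hs : 0 < s := hEsub hsE
      have h1 : (0:ℝ) < s + 1 := by linarith
      refine ⟨?_, ?_, ?_⟩
      · simp only [mem_preimage, hψdef]
        have : 1 / (s+1)⁻¹ - 1 = s := by field_simp; ring
        rw [this]; exact hsE
      · positivity
      · rw [hψdef]
        simp only
        rw [inv_lt_one_iff₀]
        right; linarith
    · rintro ⟨hz1, hz2, hz3⟩
      refine ⟨1/z - 1, hz1, ?_⟩
      have hz : z ≠ 0 := ne_of_gt hz2
      simp only [hψdef]
      field_simp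
      ring
  have himm : MeasurableSet (ψ '' E) := by
    rw [him]
    exact (((measurable_const.div measurable_id).sub measurable_const) hE).inter
      measurableSet_Ioo
  have himsub : ψ '' E ⊆ Ioo 0 1 := by rw [him]; exact inter_subset_right
  have hpre : ψ ⁻¹' (ψ '' E) = E := Function.Injective.preimage_image hψinj E
  have hder : ∀ s ∈ E, HasDerivWithinAt ψ (-(((s+1)^2)⁻¹)) E s := by
    intro s hs
    have h1 : s + 1 ≠ 0 := by have := hEsub hs; simp only [mem_Ioi] at this; positivity
    have := (((hasDerivAt_id s).add_const 1).inv h1).hasDerivWithinAt (s := E)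
    simp only [id] at this
    exact this.congr_deriv (by ring)
  calc μ E = μ (ψ ⁻¹' (ψ '' E)) := by rw [hpre]
    _ = (μ.map ψ) (ψ '' E) := (Measure.map_apply hψm himm).symm
    _ = ∫⁻ z in ψ '' E, ENNReal.ofReal (fZ z) ∂(volume.restrict (Ioo 0 1)) := by
        rw [hμ, withDensity_apply _ himm]
    _ = ∫⁻ z in ψ '' E, ENNReal.ofReal (fZ z) := by
        rw [Measure.restrict_restrict himm, inter_eq_left.2 himsub]
    _ = ∫⁻ s in E, ENNReal.ofReal |(-(((s+1)^2)⁻¹))| * ENNReal.ofReal (fZ (ψ s)) :=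
        my_lintegral_cov hE hder (hψinj.injOn) _
    _ = ∫⁻ s in E, ENNReal.ofReal (((s+1)^2)⁻¹) * ENNReal.ofReal (fZ ((s+1)⁻¹)) := by
        apply setLIntegral_congr_fun hE
        intro s hs
        beta_reduce
        congr 1
        rw [abs_neg, abs_inv, abs_of_nonneg (by positivity)]
lemma lemB (fX fY : ℝ → ℝ) (hfXm : Measurable fX) (hfYm : Measurable fY)
    (hfX0 : ∀ x, 0 ≤ fX x)
    (hXz : ∀ᵐ x ∂(volume : Measure ℝ), x ≤ 0 → fX x = 0)
    (μX μY : Measure ℝ) [SigmaFinite μY]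
    (hX : μX = volume.withDensity fun x => ENNReal.ofReal (fX x))
    (hY : μY = volume.withDensity fun y => ENNReal.ofReal (fY y))
    {E : Set ℝ} (hE : MeasurableSet E) (hEsub : E ⊆ Ioi 0) :
    (μX.prod μY).map (fun p : ℝ × ℝ => p.2 / p.1) E =
      ∫⁻ s in E, ∫⁻ x in Ioi 0,
        ENNReal.ofReal (fX x) * (ENNReal.ofReal x * ENNReal.ofReal (fY (x * s))) := by
  have hqm : Measurable (fun p : ℝ × ℝ => p.2 / p.1) := measurable_snd.div measurable_fst
  have hsec : ∀ x : ℝ, MeasurableSet ((fun y => y / x) ⁻¹' E) :=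
    fun x => (measurable_id.div_const x) hE
  -- inner section value for x > 0
  have hinner : ∀ x : ℝ, 0 < x →
      μY ((fun y => y / x) ⁻¹' E) = ENNReal.ofReal x * ∫⁻ s in E, ENNReal.ofReal (fY (x * s)) := by
    intro x hx
    have hxne : x ≠ 0 := ne_of_gt hx
    have hvol : (volume : Measure ℝ) =
        ENNReal.ofReal |x| • Measure.map (fun s : ℝ => x * s) volume := by
      rw [Real.map_volume_mul_left hxne, smul_smul, ← ENNReal.ofReal_mul (abs_nonneg _),
        ← abs_mul, mul_inv_cancel₀ hxne, abs_one, ENNReal.ofReal_one, one_smul]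
    have hpreE : (fun s : ℝ => x * s) ⁻¹' ((fun y => y / x) ⁻¹' E) = E := by
      ext s; simp [mul_div_cancel_left₀ _ hxne]
    rw [hY, withDensity_apply _ (hsec x)]
    conv_lhs => rw [hvol]
    rw [Measure.restrict_smul, lintegral_smul_measure,
      Measure.restrict_map (measurable_const_mul x) (hsec x), hpreE,
      lintegral_map hfYm.ennreal_ofReal (measurable_const_mul x),
      abs_of_pos hx, smul_eq_mul]
  calc (μX.prod μY).map (fun p : ℝ × ℝ => p.2 / p.1) E
      = (μX.prod μY) ((fun p : ℝ × ℝ => p.2 / p.1) ⁻¹' E) := Measure.map_apply hqm hE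
    _ = ∫⁻ x, μY ((fun y => y / x) ⁻¹' E) ∂μX := by
        rw [Measure.prod_apply (hqm hE)]; rfl
    _ = ∫⁻ x, ENNReal.ofReal (fX x) * μY ((fun y => y / x) ⁻¹' E) ∂volume := by
        have hmeas : Measurable fun x => μY ((fun y => y / x) ⁻¹' E) := by
          rw [hY]; exact measurable_measure_prodMk_left (hqm hE)
        rw [hX, lintegral_withDensity_eq_lintegral_mul _ hfXm.ennreal_ofReal hmeas]
        rfl
    _ = ∫⁻ x, Set.indicator (Ioi 0)
          (fun x => ENNReal.ofReal (fX x) *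
            (ENNReal.ofReal x * ∫⁻ s in E, ENNReal.ofReal (fY (x * s)))) x ∂volume := by
        apply lintegral_congr_ae
        filter_upwards [hXz] with x hx0
        rcases le_or_gt x 0 with h | h
        · rw [hx0 h, Set.indicator_of_notMem (by simpa using h)]
          simp
        · rw [Set.indicator_of_mem (by simpa using h), hinner x h]
    _ = ∫⁻ x in Ioi 0, ENNReal.ofReal (fX x) *
          (ENNReal.ofReal x * ∫⁻ s in E, ENNReal.ofReal (fY (x * s))) ∂volume := by
        rw [← lintegral_indicator measurableSet_Ioi]
    _ = ∫⁻ x in Ioi 0, ∫⁻ s in E,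
          ENNReal.ofReal (fX x) * (ENNReal.ofReal x * ENNReal.ofReal (fY (x * s))) ∂volume := by
        apply lintegral_congr
        intro x
        rw [← lintegral_const_mul' _ _ ENNReal.ofReal_ne_top,
          ← lintegral_const_mul' _ _ ENNReal.ofReal_ne_top]
    _ = ∫⁻ s in E, ∫⁻ x in Ioi 0,
          ENNReal.ofReal (fX x) * (ENNReal.ofReal x * ENNReal.ofReal (fY (x * s))) := by
        apply lintegral_lintegral_swap
        apply Measurable.aemeasurable
        exact ((ENNReal.measurable_ofReal.comp (hfXm.comp measurable_fst)).mul
          ((ENNReal.measurable_ofReal.comp measurable_fst).mul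
            (ENNReal.measurable_ofReal.comp (hfYm.comp (measurable_fst.mul measurable_snd)))))

theorem theorem_one
    {Ω : Type*} [MeasurableSpace Ω] (P : Measure Ω) [IsProbabilityMeasure P]
    (X Y : Ω → ℝ) (hXm : Measurable X) (hYm : Measurable Y)
    (hindep : IndepFun X Y P)
    (hXpos : ∀ᵐ ω ∂P, 0 < X ω) (hYpos : ∀ᵐ ω ∂P, 0 < Y ω)
    (fX fY fZ A B : ℝ → ℝ)
    (hfXm : Measurable fX) (hfYm : Measurable fY) (hfZm : Measurable fZ)
    (hfX0 : ∀ x, 0 ≤ fX x) (hfY0 : ∀ y, 0 ≤ fY y) (hfZ0 : ∀ z, 0 ≤ fZ z)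
    (hX : P.map X = volume.withDensity (fun x => ENNReal.ofReal (fX x)))
    (hY : P.map Y = volume.withDensity (fun y => ENNReal.ofReal (fY y)))
    (hZ : P.map (fun ω => X ω / (X ω + Y ω)) =
      (volume.restrict (Ioo 0 1)).withDensity (fun z => ENNReal.ofReal (fZ z)))
    (lam θ : ℝ) (hlam : 0 < lam) (hθ : 0 < θ)
    (hA : ∀ s ∈ Ioi (0:ℝ), 0 < A s) (hB : ∀ x ∈ Ioi (0:ℝ), 0 < B x)
    (hdecomp : ∀ s ∈ Ioi (0:ℝ), ∀ x ∈ Ioi (0:ℝ),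
      fY (s * x) = A s * B x * Real.exp (-(lam * (s * x) ^ θ))) :
    ∀ᵐ s ∂(volume.restrict (Ioi (0:ℝ))),
      (1 / (A s * (s + 1) ^ 2)) * fZ (1 / (s + 1)) =
        ∫ x in Ioi (0:ℝ), x * B x * fX x * Real.exp (-(lam * s ^ θ * x ^ θ)) := by
  haveI hPX : IsProbabilityMeasure (P.map X) := Measure.isProbabilityMeasure_map hXm.aemeasurable
  haveI hPY : IsProbabilityMeasure (P.map Y) := Measure.isProbabilityMeasure_map hYm.aemeasurable
  set W : Ω → ℝ := fun ω => Y ω / X ω with hWdef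
  have hWm : Measurable W := hYm.div hXm
  have hpair : P.map (fun ω => (X ω, Y ω)) = (P.map X).prod (P.map Y) :=
    (indepFun_iff_map_prod_eq_prod_map_map hXm.aemeasurable hYm.aemeasurable).mp hindep
  have hqm : Measurable (fun p : ℝ × ℝ => p.2 / p.1) := measurable_snd.div measurable_fst
  have hμWq : P.map W = ((P.map X).prod (P.map Y)).map (fun p : ℝ × ℝ => p.2 / p.1) := by
    rw [← hpair, Measure.map_map hqm (hXm.prodMk hYm)]; rfl
  have hXz : ∀ᵐ x ∂(volume : Measure ℝ), x ≤ 0 → fX x = 0 := by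
    have h0 : (P.map X) (Iic 0) = 0 := by
      rw [Measure.map_apply hXm measurableSet_Iic]
      exact measure_mono_null (fun ω hω => not_lt.mpr hω) (ae_iff.mp hXpos)
    rw [hX, withDensity_apply _ measurableSet_Iic] at h0
    have h1 := (lintegral_eq_zero_iff hfXm.ennreal_ofReal).mp h0
    rw [Filter.EventuallyEq, ae_restrict_iff' measurableSet_Iic] at h1
    filter_upwards [h1] with x hx hx0
    have h2 := hx hx0
    simp only [Pi.zero_apply, ENNReal.ofReal_eq_zero] at h2
    exact le_antisymm h2 (hfX0 x)
  have hψm : Measurable (fun s : ℝ => (s + 1)⁻¹) := (measurable_id.add_const 1).inv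
  have hψcomp : (fun ω => X ω / (X ω + Y ω)) =ᵐ[P] (fun s : ℝ => (s + 1)⁻¹) ∘ W := by
    filter_upwards [hXpos, hYpos] with ω hx hy
    have hxne : X ω ≠ 0 := ne_of_gt hx
    have hxyne : X ω + Y ω ≠ 0 := by positivity
    simp only [Function.comp_apply, hWdef]
    field_simp
    exact add_comm _ _
  have hμZ : (P.map W).map (fun s : ℝ => (s + 1)⁻¹) =
      (volume.restrict (Ioo 0 1)).withDensity fun z => ENNReal.ofReal (fZ z) := by
    rw [Measure.map_map hψm hWm, ← Measure.map_congr hψcomp, hZ]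
  have hdens : ∀ᵐ s ∂(volume.restrict (Ioi (0:ℝ))),
      ENNReal.ofReal (((s + 1) ^ 2)⁻¹) * ENNReal.ofReal (fZ ((s + 1)⁻¹)) =
      ∫⁻ x in Ioi 0, ENNReal.ofReal (fX x) * (ENNReal.ofReal x * ENNReal.ofReal (fY (x * s))) := by
    apply ae_eq_of_forall_setLIntegral_eq_of_sigmaFinite
    · exact (((measurable_id.add_const 1).pow_const 2).inv.ennreal_ofReal).mul
        ((hfZm.comp (measurable_id.add_const 1).inv).ennreal_ofReal)
    · apply Measurable.lintegral_prod_right'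
        (f := fun p : ℝ × ℝ => ENNReal.ofReal (fX p.2) *
          (ENNReal.ofReal p.2 * ENNReal.ofReal (fY (p.2 * p.1))))
      exact ((hfXm.comp measurable_snd).ennreal_ofReal).mul
        ((measurable_snd.ennreal_ofReal).mul
          ((hfYm.comp (measurable_snd.mul measurable_fst)).ennreal_ofReal))
    · intro t ht _
      simp only [Measure.restrict_restrict ht]
      have hE : MeasurableSet (t ∩ Ioi 0) := ht.inter measurableSet_Ioi
      have hEsub : t ∩ Ioi 0 ⊆ Ioi 0 := inter_subset_right
      rw [← lemA fZ (P.map W) hμZ hE hEsub, hμWq,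
        lemB fX fY hfXm hfYm hfX0 hXz (P.map X) (P.map Y) hX hY hE hEsub]
  have hA1 : 0 < A 1 := hA 1 (by norm_num)
  have hrpowm : Measurable fun x : ℝ => x ^ θ := (Real.continuous_rpow_const hθ.le).measurable
  have hBeq : ∀ x ∈ Ioi (0:ℝ), B x = fY x * Real.exp (lam * x ^ θ) / A 1 := by
    intro x hx
    have h := hdecomp 1 (by norm_num) x hx
    rw [one_mul] at h
    rw [h, Real.exp_neg]
    field_simp
  filter_upwards [hdens, ae_restrict_mem measurableSet_Ioi] with s hkey hs0
  have hs : (0:ℝ) < s := hs0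
  have hs1 : (0:ℝ) < s + 1 := by linarith
  have hAs : 0 < A s := hA s hs0
  have hcongr : ∀ x ∈ Ioi (0:ℝ),
      ENNReal.ofReal (fX x) * (ENNReal.ofReal x * ENNReal.ofReal (fY (x * s))) =
      ENNReal.ofReal (A s) *
        ENNReal.ofReal (x * B x * fX x * Real.exp (-(lam * s ^ θ * x ^ θ))) := by
    intro x hx
    have hx0 : (0:ℝ) < x := hx
    rw [← ENNReal.ofReal_mul hx0.le, ← ENNReal.ofReal_mul (hfX0 x),
      ← ENNReal.ofReal_mul hAs.le]
    refine congrArg ENNReal.ofReal ?_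
    rw [mul_comm x s, hdecomp s hs0 x hx, Real.mul_rpow hs.le hx0.le]
    ring
  rw [setLIntegral_congr_fun measurableSet_Ioi hcongr,
    lintegral_const_mul' _ _ ENNReal.ofReal_ne_top] at hkey
  set L : ℝ≥0∞ :=
    ∫⁻ x in Ioi (0:ℝ), ENNReal.ofReal (x * B x * fX x * Real.exp (-(lam * s ^ θ * x ^ θ)))
    with hLdef
  have hfin : ENNReal.ofReal (((s + 1) ^ 2)⁻¹) * ENNReal.ofReal (fZ ((s + 1)⁻¹)) ≠ ⊤ :=
    (ENNReal.mul_lt_top ENNReal.ofReal_lt_top ENNReal.ofReal_lt_top).ne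
  have hLt : L ≠ ⊤ := by
    intro htop
    rw [htop, ENNReal.mul_top (ENNReal.ofReal_pos.mpr hAs).ne'] at hkey
    exact hfin hkey
  have hreal : ((s + 1) ^ 2)⁻¹ * fZ ((s + 1)⁻¹) = A s * L.toReal := by
    have h2 := congrArg ENNReal.toReal hkey
    rwa [ENNReal.toReal_mul, ENNReal.toReal_mul, ENNReal.toReal_ofReal (by positivity),
      ENNReal.toReal_ofReal (hfZ0 _), ENNReal.toReal_ofReal hAs.le] at h2
  have hint : ∫ x in Ioi (0:ℝ), x * B x * fX x * Real.exp (-(lam * s ^ θ * x ^ θ)) =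
      L.toReal := by
    rw [integral_eq_lintegral_of_nonneg_ae]
    · filter_upwards [ae_restrict_mem measurableSet_Ioi] with x hx
      have hx0 : (0:ℝ) < x := hx
      have hBx := hB x hx
      exact mul_nonneg (mul_nonneg (mul_nonneg hx0.le hBx.le) (hfX0 x))
        (Real.exp_pos _).le
    · have hg0 : Measurable fun x : ℝ =>
          x * (fY x * Real.exp (lam * x ^ θ) / A 1) * fX x *
            Real.exp (-(lam * s ^ θ * x ^ θ)) := by
        apply Measurable.mul
        apply Measurable.mul
        apply Measurable.mul measurable_id
        · exact (hfYm.mul (Real.measurable_exp.comp (measurable_const.mul hrpowm))).div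
            measurable_const
        · exact hfXm
        · exact Real.measurable_exp.comp ((measurable_const.mul hrpowm).neg)
      refine hg0.aestronglyMeasurable.congr ?_
      filter_upwards [ae_restrict_mem measurableSet_Ioi] with x hx
      rw [hBeq x hx]
  rw [hint, one_div (s+1)]
  have hL0 : 0 ≤ L.toReal := ENNReal.toReal_nonneg
  field_simp at hreal ⊢
  linarith [hreal]
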